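/- arXiv:1806.11531 — 4 statements merged into one kernel-verified Lean document; each statement's English description precedes it below -/
import Mathlib

section
/- Let W be a stochastic matrix from a finite set X to pmfs on a finite set Y. Then the order-α Rényi center q_{α,W} is a continuous function of α on (0,1] with respect to total variation distance: for every α ∈ (0,1], lim_{β→α} ‖q_{β,W} − q_{α,W}‖₁ = 0. -/
open Real MeasureTheory Filter

def IsPMF {Y : Type*} [Fintype Y] (W : Y → ℝ) : Prop :=
  (∀ y, 0 ≤ W y) ∧ ∑ y, W y = 1

noncomputable def renyiDiv {Y : Type*} [Fintype Y] (α : ℝ) (W Q : Y → ℝ) : ℝ :=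
  if α = 1 then ∑ y, W y * Real.log (W y / Q y)
  else (α - 1)⁻¹ * Real.log (∑ y, W y ^ α * Q y ^ (1 - α))

open Classical in
/-- Extended-real-valued order-`α` Rényi divergence, taking the value `⊤` when the
divergence is infinite. -/
noncomputable def renyiDivE {Y : Type*} [Fintype Y] (α : ℝ) (W Q : Y → ℝ) : ENNReal :=
  if α = 1 then
    (if ∀ y, Q y = 0 → W y = 0 then ENNReal.ofReal (renyiDiv 1 W Q) else ⊤)
  else
    (if 0 < ∑ y, W y ^ α * Q y ^ (1 - α) then ENNReal.ofReal (renyiDiv α W Q) else ⊤)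

/-- The order-`α` tilted pmf `W^α_Q`. -/
noncomputable def tilt {Y : Type*} [Fintype Y] (α : ℝ) (W Q : Y → ℝ) : Y → ℝ :=
  fun y => Real.exp ((1 - α) * renyiDiv α W Q) * W y ^ α * Q y ^ (1 - α)

/-- The order-`α` Rényi information `I_α(P;W)` (mutual information for `α = 1`). -/
noncomputable def renyiInfo {X Y : Type*} [Fintype X] [Fintype Y] (α : ℝ) (P : X → ℝ)
    (W : X → Y → ℝ) : ℝ :=
  if α = 1 then ∑ x, P x * ∑ y, W x y * Real.log (W x y / (∑ x', P x' * W x' y))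
  else (α / (α - 1)) * Real.log (∑ y, (∑ x, P x * W x y ^ α) ^ α⁻¹)

/-- The order-`α` Rényi capacity `C_α(W) = sup_P I_α(P;W)`. -/
noncomputable def renyiCap {X Y : Type*} [Fintype X] [Fintype Y] (α : ℝ) (W : X → Y → ℝ) : ℝ :=
  sSup {c | ∃ P : X → ℝ, IsPMF P ∧ c = renyiInfo α P W}

/-- The sphere packing exponent `E_sp(R,W)`. -/
noncomputable def spe {X Y : Type*} [Fintype X] [Fintype Y] (R : ℝ) (W : X → Y → ℝ) : ℝ :=
  sSup {e | ∃ α ∈ Set.Ioo (0:ℝ) 1, e = ((1 - α) / α) * (renyiCap α W - R)}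

/-- The order-`α` Rényi mean `q_{α,P}`. -/
noncomputable def renyiMean {X Y : Type*} [Fintype X] [Fintype Y] (α : ℝ) (P : X → ℝ)
    (W : X → Y → ℝ) : Y → ℝ :=
  fun y => (∑ x, P x * W x y ^ α) ^ α⁻¹ / ∑ y', (∑ x, P x * W x y' ^ α) ^ α⁻¹


/-!
Write `Z_β(p, r) = ∑ p^β r^(1-β)` (`renyiSum`); for `β < 1`, `D_β(p‖r) ≤ c` means
`exp((β-1)c) ≤ Z_β(p, r)`. By Sibson's identity, if `D_β(W_x‖Q) ≤ c` for every row `x`, then the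
Rényi mean `q_{β,P}` of any input `P` satisfies `D_β(q_{β,P}‖Q) ≤ c - I_β(P)`.

Fix `α` and let `β ∈ (α/2, 1)` tend to `α`. Continuity of `D_β` and of `I_β` in the order gives
`D_β(W_x‖q_α) ≤ C_α + δ` and `C_β ≥ C_α - δ`, while `D_β(W_x‖q_β) ≤ C_β` since `q_β` is the
center. Hence for an input `P` that is `δ`-optimal at order `β`, `q_{β,P}` is `3δ`-close to both
`q_α` and `q_β` in `D_β`, so also in `D_{α/2}` by monotonicity of `D` in the order. At the fixed
order `α/2`, closeness in `D` forces closeness in total variation, by compactness of the simplex.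
-/

open Topology

section renyiSum

variable {Y : Type*} [Fintype Y]

noncomputable def renyiSum (s : ℝ) (p r : Y → ℝ) : ℝ := ∑ y, p y ^ s * r y ^ (1 - s)

theorem renyiDiv_of_ne_one {β : ℝ} (hβ : β ≠ 1) (p r : Y → ℝ) :
    renyiDiv β p r = (β - 1)⁻¹ * Real.log (renyiSum β p r) := by
  rw [renyiDiv, if_neg hβ, renyiSum]

theorem renyiDiv_one (p r : Y → ℝ) : renyiDiv 1 p r = ∑ y, p y * Real.log (p y / r y) := by
  rw [renyiDiv, if_pos rfl]

theorem IsPMF.exists_pos {p : Y → ℝ} (hp : IsPMF p) : ∃ y, 0 < p y := by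
  by_contra! h
  have := Finset.sum_nonpos fun y (_ : y ∈ Finset.univ) => h y
  linarith [hp.2]

theorem renyiSum_nonneg {s : ℝ} {p r : Y → ℝ} (hp : ∀ y, 0 ≤ p y) (hr : ∀ y, 0 ≤ r y) :
    0 ≤ renyiSum s p r :=
  Finset.sum_nonneg fun y _ => mul_nonneg (rpow_nonneg (hp y) _) (rpow_nonneg (hr y) _)

theorem renyiSum_pos_iff {s : ℝ} (hs0 : 0 < s) (hs1 : s < 1) {p r : Y → ℝ}
    (hp : ∀ y, 0 ≤ p y) (hr : ∀ y, 0 ≤ r y) :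
    0 < renyiSum s p r ↔ ∃ y, 0 < p y ∧ 0 < r y := by
  rw [renyiSum, Finset.sum_pos_iff_of_nonneg fun y _ =>
    mul_nonneg (rpow_nonneg (hp y) _) (rpow_nonneg (hr y) _)]
  refine exists_congr fun y => ?_
  simp only [Finset.mem_univ, true_and, (mul_nonneg (rpow_nonneg (hp y) s)
    (rpow_nonneg (hr y) (1 - s))).lt_iff_ne', (hp y).lt_iff_ne', (hr y).lt_iff_ne', ne_eq,
    mul_eq_zero, rpow_eq_zero_iff_of_nonneg (hp y), rpow_eq_zero_iff_of_nonneg (hr y),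
    hs0.ne', sub_ne_zero.2 hs1.ne', not_false_eq_true, and_true, not_or]

theorem rpow_mul_rpow_lt_add {s a b : ℝ} (hs0 : 0 < s) (hs1 : s < 1) (ha : 0 ≤ a) (hb : 0 ≤ b)
    (hab : a ≠ b) : a ^ s * b ^ (1 - s) < s * a + (1 - s) * b := by
  have h := (Real.geom_mean_lt_arith_mean_weighted_iff_of_pos Finset.univ ![s, 1 - s] ![a, b]
    (by simp [Fin.forall_fin_two, hs0, hs1]) (by simp) (by simp [Fin.forall_fin_two, ha, hb])).2
    ⟨0, Finset.mem_univ _, 1, Finset.mem_univ _, by simpa using hab⟩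
  simpa [Fin.prod_univ_two, Fin.sum_univ_two] using h

theorem renyiSum_le_one {s : ℝ} (hs0 : 0 ≤ s) (hs1 : s ≤ 1) {p r : Y → ℝ}
    (hp : IsPMF p) (hr : IsPMF r) : renyiSum s p r ≤ 1 :=
  calc renyiSum s p r ≤ ∑ y, (s * p y + (1 - s) * r y) :=
        Finset.sum_le_sum fun y _ =>
          geom_mean_le_arith_mean2_weighted hs0 (by linarith) (hp.1 y) (hr.1 y) (by ring)
    _ = 1 := by rw [Finset.sum_add_distrib, ← Finset.mul_sum, ← Finset.mul_sum, hp.2, hr.2]; ring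

theorem renyiSum_lt_one {s : ℝ} (hs0 : 0 < s) (hs1 : s < 1) {p r : Y → ℝ}
    (hp : IsPMF p) (hr : IsPMF r) (hpr : p ≠ r) : renyiSum s p r < 1 := by
  obtain ⟨y, hy⟩ := Function.ne_iff.1 hpr
  calc renyiSum s p r < ∑ y, (s * p y + (1 - s) * r y) :=
        Finset.sum_lt_sum (fun y _ => geom_mean_le_arith_mean2_weighted hs0.le (by linarith)
          (hp.1 y) (hr.1 y) (by ring))
          ⟨y, Finset.mem_univ _, rpow_mul_rpow_lt_add hs0 hs1 (hp.1 y) (hr.1 y) hy⟩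
    _ = 1 := by rw [Finset.sum_add_distrib, ← Finset.mul_sum, ← Finset.mul_sum, hp.2, hr.2]; ring

/-- Below order `1`, bounds on `renyiDiv` are stated throughout in the form on the right: it
excludes the junk case `renyiSum β p r = 0`, where `renyiDiv β p r = 0` although the divergence
is infinite. -/
theorem renyiDiv_le_iff {β c : ℝ} (hβ : β < 1) {p r : Y → ℝ} (hZ : 0 < renyiSum β p r) :
    renyiDiv β p r ≤ c ↔ Real.exp ((β - 1) * c) ≤ renyiSum β p r := by
  rw [renyiDiv_of_ne_one hβ.ne, ← le_log_iff_exp_le hZ, ← div_eq_inv_mul,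
    div_le_iff_of_neg' (by linarith)]

theorem mul_div_rpow_one_sub {b p r : ℝ} (hb : 0 < b) (hp : 0 ≤ p) (hr : 0 ≤ r) :
    p * (r / p) ^ (1 - b) = p ^ b * r ^ (1 - b) := by
  rcases hp.eq_or_lt with rfl | hp
  · simp [zero_rpow hb.ne']
  · rw [div_rpow hr hp.le, mul_div_assoc', div_eq_iff (rpow_pos_of_pos hp _).ne', mul_right_comm,
      ← rpow_add hp, add_sub_cancel, rpow_one]

/-- The power-mean inequality; in terms of divergences it says `D_s(p‖r) ≤ D_β(p‖r)`. -/
theorem renyiSum_le_rpow_renyiSum {s β : ℝ} (hs : 0 < s) (hsβ : s ≤ β) (hβ : β < 1)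
    {p r : Y → ℝ} (hp : IsPMF p) (hr : ∀ y, 0 ≤ r y) :
    renyiSum β p r ≤ renyiSum s p r ^ ((1 - β) / (1 - s)) := by
  have he : 1 ≤ (1 - s) / (1 - β) := by rw [le_div_iff₀ (by linarith)]; linarith
  have key := Real.arith_mean_le_rpow_mean Finset.univ p (fun y => (r y / p y) ^ (1 - β))
    (fun y _ => hp.1 y) hp.2 (fun y _ => rpow_nonneg (div_nonneg (hr y) (hp.1 y)) _) he
  have hpow : ∀ y, ((r y / p y) ^ (1 - β)) ^ ((1 - s) / (1 - β)) = (r y / p y) ^ (1 - s) :=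
    fun y => by rw [← rpow_mul (div_nonneg (hr y) (hp.1 y)), mul_div_cancel₀ _ (by linarith)]
  simp only [hpow, mul_div_rpow_one_sub (by linarith : 0 < β) (hp.1 _) (hr _),
    mul_div_rpow_one_sub hs (hp.1 _) (hr _), one_div, inv_div] at key
  exact key

theorem exp_le_renyiSum_of_le {s β d : ℝ} (hs : 0 < s) (hsβ : s ≤ β) (hβ : β < 1)
    {p r : Y → ℝ} (hp : IsPMF p) (hr : ∀ y, 0 ≤ r y)
    (h : Real.exp ((β - 1) * d) ≤ renyiSum β p r) :
    Real.exp ((s - 1) * d) ≤ renyiSum s p r := by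
  have ht : 0 < (1 - β) / (1 - s) := div_pos (by linarith) (by linarith)
  by_contra! hlt
  have hexp : Real.exp ((s - 1) * d) ^ ((1 - β) / (1 - s)) = Real.exp ((β - 1) * d) := by
    have : 1 - s ≠ 0 := by linarith
    rw [← Real.exp_mul]
    congr 1
    field_simp
    ring
  have := rpow_lt_rpow (renyiSum_nonneg hp.1 hr) hlt ht
  rw [hexp] at this
  exact (h.trans (renyiSum_le_rpow_renyiSum hs hsβ hβ hp hr)).not_gt this

theorem continuous_renyiSum {s : ℝ} (hs0 : 0 ≤ s) (hs1 : s ≤ 1) :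
    Continuous fun pr : (Y → ℝ) × (Y → ℝ) => renyiSum s pr.1 pr.2 :=
  continuous_finsetSum _ fun y _ =>
    (((continuous_apply y).comp continuous_fst).rpow_const fun _ => Or.inr hs0).mul
      (((continuous_apply y).comp continuous_snd).rpow_const fun _ => Or.inr (by linarith))

theorem exists_sum_abs_sub_lt_of_lt_renyiSum {s ε : ℝ} (hs0 : 0 < s) (hs1 : s < 1)
    (hε : 0 < ε) : ∃ η > 0, ∀ p r : Y → ℝ, IsPMF p → IsPMF r →
      1 - η < renyiSum s p r → ∑ y, |p y - r y| < ε := by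
  set K := (stdSimplex ℝ Y ×ˢ stdSimplex ℝ Y) ∩ {pr | ε ≤ ∑ y, |pr.1 y - pr.2 y|}
  have hK : IsCompact K :=
    ((isCompact_stdSimplex ℝ Y).prod (isCompact_stdSimplex ℝ Y)).inter_right <|
      isClosed_le continuous_const <| continuous_finsetSum _ fun y _ =>
        (((continuous_apply y).comp continuous_fst).sub
          ((continuous_apply y).comp continuous_snd)).abs
  rcases K.eq_empty_or_nonempty with hK0 | hK0
  · refine ⟨1, one_pos, fun p r hp hr _ => not_le.1 fun h => ?_⟩
    exact hK0.subset (show (p, r) ∈ K from ⟨⟨hp, hr⟩, h⟩)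
  obtain ⟨⟨p₀, r₀⟩, ⟨⟨hp₀, hr₀⟩, hε₀⟩, hmax⟩ :=
    hK.exists_isMaxOn hK0 (continuous_renyiSum hs0.le hs1.le).continuousOn
  have hne : p₀ ≠ r₀ := by
    rintro rfl
    simp only [Set.mem_ofPred_eq, sub_self, abs_zero, Finset.sum_const_zero] at hε₀
    linarith
  refine ⟨1 - renyiSum s p₀ r₀, sub_pos.2 (renyiSum_lt_one hs0 hs1 hp₀ hr₀ hne),
    fun p r hp hr hZ => not_le.1 fun h => ?_⟩
  have : renyiSum s p r ≤ renyiSum s p₀ r₀ := hmax (show (p, r) ∈ K from ⟨⟨hp, hr⟩, h⟩)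
  linarith

theorem exists_sum_abs_sub_lt_of_exp_le_renyiSum {s ε : ℝ} (hs0 : 0 < s) (hs1 : s < 1)
    (hε : 0 < ε) : ∃ d > 0, ∀ β, s ≤ β → β < 1 → ∀ p r : Y → ℝ, IsPMF p → IsPMF r →
      Real.exp ((β - 1) * d) ≤ renyiSum β p r → ∑ y, |p y - r y| < ε := by
  obtain ⟨η, hη, hclose⟩ := exists_sum_abs_sub_lt_of_lt_renyiSum (Y := Y) hs0 hs1 hε
  have hlim : Tendsto (fun d => Real.exp ((s - 1) * d)) (𝓝[>] 0) (𝓝 1) := by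
    simpa using ((continuous_const.mul continuous_id).rexp.tendsto 0).mono_left
      nhdsWithin_le_nhds
  obtain ⟨d, hdη, hd⟩ :=
    ((hlim.eventually (lt_mem_nhds (sub_lt_self 1 hη))).and self_mem_nhdsWithin).exists
  exact ⟨d, hd, fun β hsβ hβ p r hp hr h =>
    hclose p r hp hr (hdη.trans_le (exp_le_renyiSum_of_le hs0 hsβ hβ hp hr.1 h))⟩

theorem continuousAt_renyiSum {t : ℝ} (ht0 : t ≠ 0) (ht1 : t ≠ 1) (p r : Y → ℝ) :
    ContinuousAt (fun β => renyiSum β p r) t :=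
  tendsto_finsetSum _ fun _ _ => (continuousAt_const_rpow' ht0).mul
    ((continuousAt_const_rpow' (sub_ne_zero.2 ht1.symm)).comp
      (continuousAt_const.sub continuousAt_id))

theorem tendsto_renyiDiv_of_ne_one {t : ℝ} (ht0 : t ≠ 0) (ht1 : t ≠ 1) {p r : Y → ℝ}
    (hZ : 0 < renyiSum t p r) :
    Tendsto (fun β => renyiDiv β p r) (𝓝 t) (𝓝 (renyiDiv t p r)) := by
  rw [renyiDiv_of_ne_one ht1]
  refine Tendsto.congr' ?_ (((continuousAt_id.sub continuousAt_const).inv₀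
    (sub_ne_zero.2 ht1)).mul ((continuousAt_renyiSum ht0 ht1 p r).log hZ.ne'))
  filter_upwards [eventually_ne_nhds ht1] with β hβ
  rw [renyiDiv_of_ne_one hβ]
  rfl

theorem tendsto_inv_sub_one_mul_log {f : ℝ → ℝ} {f' : ℝ} (hf : HasDerivAt f f' 1)
    (hf1 : f 1 = 1) : Tendsto (fun β => (β - 1)⁻¹ * Real.log (f β)) (𝓝[≠] 1) (𝓝 f') := by
  have hlog := hasDerivAt_iff_tendsto_slope.1 (hf.log (by simp [hf1]))
  rw [hf1, div_one] at hlog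
  refine hlog.congr fun β => ?_
  simp [slope_def_field, hf1, div_eq_inv_mul]

theorem hasDerivAt_rpow_one {a : ℝ} (ha : 0 ≤ a) :
    HasDerivAt (fun β : ℝ => a ^ β) (a * Real.log a) 1 := by
  rcases ha.eq_or_lt with rfl | ha
  · refine (hasDerivAt_const (1 : ℝ) (0 : ℝ)).congr_of_eventuallyEq ?_ |>.congr_deriv (by simp)
    filter_upwards [eventually_ne_nhds one_ne_zero] with β hβ
    exact zero_rpow hβ
  · simpa using (hasStrictDerivAt_const_rpow ha 1).hasDerivAt

theorem hasDerivAt_renyiSum_one {p r : Y → ℝ} (hp : ∀ y, 0 ≤ p y) (hr : ∀ y, 0 ≤ r y)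
    (hac : ∀ y, r y = 0 → p y = 0) :
    HasDerivAt (fun β => renyiSum β p r) (renyiDiv 1 p r) 1 := by
  rw [renyiDiv_one]
  refine HasDerivAt.fun_sum fun y _ => ?_
  rcases (hr y).eq_or_lt with hr0 | hr0
  · rw [← hr0, hac y hr0.symm]
    refine (hasDerivAt_const (1 : ℝ) (0 : ℝ)).congr_of_eventuallyEq ?_ |>.congr_deriv (by simp)
    filter_upwards [eventually_ne_nhds one_ne_zero] with β hβ
    simp [zero_rpow hβ]
  · have heq : (fun β : ℝ => p y ^ β * r y ^ (1 - β)) = fun β => r y * (p y / r y) ^ β := by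
      funext β
      rw [div_rpow (hp y) hr0.le, rpow_sub hr0, rpow_one]
      field_simp
    have hval : p y * Real.log (p y / r y) = r y * (p y / r y * Real.log (p y / r y)) := by
      field_simp
    rw [heq, hval]
    exact (hasDerivAt_rpow_one (div_nonneg (hp y) hr0.le)).const_mul (r y)

theorem tendsto_renyiDiv_one {p r : Y → ℝ} (hp : IsPMF p) (hr : ∀ y, 0 ≤ r y)
    (hac : ∀ y, r y = 0 → p y = 0) :
    Tendsto (fun β => renyiDiv β p r) (𝓝[≠] 1) (𝓝 (renyiDiv 1 p r)) := by
  refine (tendsto_inv_sub_one_mul_log (hasDerivAt_renyiSum_one hp.1 hr hac)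
    (by simp [renyiSum, hp.2])).congr' ?_
  filter_upwards [self_mem_nhdsWithin] with β hβ
  rw [renyiDiv_of_ne_one hβ]

theorem renyiDivE_ne_top_iff {β : ℝ} (hβ : β ≠ 1) {p r : Y → ℝ} :
    renyiDivE β p r ≠ ⊤ ↔ 0 < renyiSum β p r := by
  unfold renyiDivE
  split_ifs <;> simp_all [renyiSum]

theorem renyiDivE_one_ne_top_iff {p r : Y → ℝ} :
    renyiDivE 1 p r ≠ ⊤ ↔ ∀ y, r y = 0 → p y = 0 := by
  unfold renyiDivE
  split_ifs <;> simp_all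

theorem renyiDivE_eq_ofReal {β : ℝ} {p r : Y → ℝ} (h : renyiDivE β p r ≠ ⊤) :
    renyiDivE β p r = ENNReal.ofReal (renyiDiv β p r) := by
  unfold renyiDivE at h ⊢
  split_ifs at h ⊢ <;> simp_all

theorem exists_pos_of_renyiDivE_ne_top {α : ℝ} (hα : α ∈ Set.Ioc (0 : ℝ) 1) {p r : Y → ℝ}
    (hp : IsPMF p) (hr : ∀ y, 0 ≤ r y) (h : renyiDivE α p r ≠ ⊤) :
    ∃ y, 0 < p y ∧ 0 < r y := by
  rcases hα.2.eq_or_lt with rfl | hα1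
  · obtain ⟨y, hy⟩ := hp.exists_pos
    exact ⟨y, hy, (hr y).lt_of_ne fun h0 => hy.ne' (renyiDivE_one_ne_top_iff.1 h y h0.symm)⟩
  · exact (renyiSum_pos_iff hα.1 hα1 hp.1 hr).1 ((renyiDivE_ne_top_iff hα1.ne).1 h)

theorem tendsto_renyiDiv_nhdsWithin_Ioo {α : ℝ} (hα : α ∈ Set.Ioc (0 : ℝ) 1) {p r : Y → ℝ}
    (hp : IsPMF p) (hr : ∀ y, 0 ≤ r y) (h : renyiDivE α p r ≠ ⊤) :
    Tendsto (fun β => renyiDiv β p r) (𝓝[Set.Ioo 0 1] α) (𝓝 (renyiDiv α p r)) := by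
  rcases hα.2.eq_or_lt with rfl | hα1
  · exact (tendsto_renyiDiv_one hp hr (renyiDivE_one_ne_top_iff.1 h)).mono_left
      (nhdsWithin_mono _ fun β hβ => hβ.2.ne)
  · exact (tendsto_renyiDiv_of_ne_one hα.1.ne' hα1.ne
      ((renyiDivE_ne_top_iff hα1.ne).1 h)).mono_left nhdsWithin_le_nhds

end renyiSum

theorem sum_mul_rpow_nonneg {X Y : Type*} [Fintype X] {P : X → ℝ} {W : X → Y → ℝ}
    (hP : ∀ x, 0 ≤ P x) (hW : ∀ x y, 0 ≤ W x y) (β : ℝ) (y : Y) :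
    0 ≤ ∑ x, P x * W x y ^ β :=
  Finset.sum_nonneg fun x _ => mul_nonneg (hP x) (rpow_nonneg (hW x y) _)

theorem hasDerivAt_sum_mul_rpow_one {X Y : Type*} [Fintype X] {P : X → ℝ} {W : X → Y → ℝ}
    (hP : ∀ x, 0 ≤ P x) (hW : ∀ x y, 0 ≤ W x y) (y : Y) :
    HasDerivAt (fun β : ℝ => (∑ x, P x * W x y ^ β) ^ β⁻¹)
      (∑ x, P x * (W x y * Real.log (W x y)) -
        (∑ x, P x * W x y) * Real.log (∑ x, P x * W x y)) 1 := by
  have hS : HasDerivAt (fun β : ℝ => ∑ x, P x * W x y ^ β)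
      (∑ x, P x * (W x y * Real.log (W x y))) 1 :=
    HasDerivAt.fun_sum fun x _ => (hasDerivAt_rpow_one (hW x y)).const_mul (P x)
  rcases (sum_mul_rpow_nonneg hP hW 1 y).eq_or_lt with h0 | h0
  · simp only [rpow_one] at h0
    have hzero : ∀ x, P x * W x y = 0 :=
      fun x => (Finset.sum_eq_zero_iff_of_nonneg fun x _ => mul_nonneg (hP x) (hW x y)).1
        h0.symm x (Finset.mem_univ _)
    have hderiv : ∑ x, P x * (W x y * Real.log (W x y)) = 0 :=
      Finset.sum_eq_zero fun x _ => by rw [← mul_assoc, hzero x, zero_mul]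
    rw [← h0, hderiv, zero_mul, sub_zero]
    refine (hasDerivAt_const (1 : ℝ) (0 : ℝ)).congr_of_eventuallyEq ?_
    filter_upwards [eventually_ne_nhds one_ne_zero] with β hβ
    have hsum : ∑ x, P x * W x y ^ β = 0 := Finset.sum_eq_zero fun x _ => by
      rcases mul_eq_zero.1 (hzero x) with h | h <;> simp [h, zero_rpow hβ]
    simp [hsum, zero_rpow (inv_ne_zero hβ)]
  · simpa [sub_eq_add_neg] using hS.rpow (hasDerivAt_inv one_ne_zero) (by simpa using h0)

section channel

variable {X Y : Type*} [Fintype X] [Fintype Y] {β c : ℝ} {P : X → ℝ} {W : X → Y → ℝ}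

noncomputable def sibsonSum (β : ℝ) (P : X → ℝ) (W : X → Y → ℝ) : ℝ :=
  ∑ y, (∑ x, P x * W x y ^ β) ^ β⁻¹

theorem renyiInfo_of_ne_one (hβ : β ≠ 1) (P : X → ℝ) (W : X → Y → ℝ) :
    renyiInfo β P W = β / (β - 1) * Real.log (sibsonSum β P W) := by
  rw [renyiInfo, if_neg hβ, sibsonSum]

theorem renyiMean_apply (β : ℝ) (P : X → ℝ) (W : X → Y → ℝ) (y : Y) :
    renyiMean β P W y = (∑ x, P x * W x y ^ β) ^ β⁻¹ / sibsonSum β P W := rfl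

theorem sibsonSum_pos (hP : IsPMF P) (hW : ∀ x, IsPMF (W x)) : 0 < sibsonSum β P W := by
  obtain ⟨x, hx⟩ := hP.exists_pos
  obtain ⟨y, hy⟩ := (hW x).exists_pos
  have hW' : ∀ x y, 0 ≤ W x y := fun x y => (hW x).1 y
  refine Finset.sum_pos' (fun y _ => rpow_nonneg (sum_mul_rpow_nonneg hP.1 hW' β y) _)
    ⟨y, Finset.mem_univ _, rpow_pos_of_pos (Finset.sum_pos'
      (fun x _ => mul_nonneg (hP.1 x) (rpow_nonneg (hW' x y) _))
      ⟨x, Finset.mem_univ _, mul_pos hx (rpow_pos_of_pos hy _)⟩) _⟩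

theorem isPMF_renyiMean (hP : IsPMF P) (hW : ∀ x, IsPMF (W x)) : IsPMF (renyiMean β P W) :=
  ⟨fun y => div_nonneg (rpow_nonneg (sum_mul_rpow_nonneg hP.1 (fun x y => (hW x).1 y) β y) _)
    (sibsonSum_pos hP hW).le,
   by simp only [renyiMean_apply, ← Finset.sum_div]; exact div_self (sibsonSum_pos hP hW).ne'⟩

/-- Sibson's identity. -/
theorem renyiSum_renyiMean_mul_exp (hβ0 : 0 < β) (hβ1 : β ≠ 1) (hP : IsPMF P)
    (hW : ∀ x, IsPMF (W x)) (Q : Y → ℝ) :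
    renyiSum β (renyiMean β P W) Q * Real.exp ((β - 1) * renyiInfo β P W) =
      ∑ x, P x * renyiSum β (W x) Q := by
  have hm := sibsonSum_pos (β := β) hP hW
  have hS := sum_mul_rpow_nonneg hP.1 (fun x y => (hW x).1 y) β
  have hexp : Real.exp ((β - 1) * renyiInfo β P W) = sibsonSum β P W ^ β := by
    rw [renyiInfo_of_ne_one hβ1, rpow_def_of_pos hm]
    congr 1
    field_simp [sub_ne_zero.2 hβ1]
  have hpow : ∀ y, renyiMean β P W y ^ β = (∑ x, P x * W x y ^ β) / sibsonSum β P W ^ β :=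
    fun y => by
      rw [renyiMean_apply, div_rpow (rpow_nonneg (hS y) _) hm.le, ← rpow_mul (hS y),
        inv_mul_cancel₀ hβ0.ne', rpow_one]
  simp only [renyiSum, hpow, hexp, Finset.mul_sum, Finset.sum_mul]
  rw [Finset.sum_comm]
  refine Finset.sum_congr rfl fun y _ => ?_
  rw [div_mul_eq_mul_div, div_mul_cancel₀ _ (rpow_pos_of_pos hm β).ne', Finset.sum_mul]
  exact Finset.sum_congr rfl fun x _ => mul_assoc _ _ _

theorem exp_le_renyiSum_renyiMean (hβ0 : 0 < β) (hβ1 : β ≠ 1) (hP : IsPMF P)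
    (hW : ∀ x, IsPMF (W x)) {Q : Y → ℝ}
    (hc : ∀ x, Real.exp ((β - 1) * c) ≤ renyiSum β (W x) Q) :
    Real.exp ((β - 1) * (c - renyiInfo β P W)) ≤ renyiSum β (renyiMean β P W) Q := by
  have hT : Real.exp ((β - 1) * c) ≤ ∑ x, P x * renyiSum β (W x) Q :=
    calc Real.exp ((β - 1) * c) = ∑ x, P x * Real.exp ((β - 1) * c) := by
          rw [← Finset.sum_mul, hP.2, one_mul]
      _ ≤ _ := Finset.sum_le_sum fun x _ => mul_le_mul_of_nonneg_left (hc x) (hP.1 x)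
  rw [← renyiSum_renyiMean_mul_exp hβ0 hβ1 hP hW, ← div_le_iff₀ (Real.exp_pos _)] at hT
  rwa [mul_sub, Real.exp_sub]

theorem exp_le_renyiSum_renyiMean_of_sub_le {d : ℝ} (hβ0 : 0 < β) (hβ1 : β < 1) (hP : IsPMF P)
    (hW : ∀ x, IsPMF (W x)) {Q : Y → ℝ}
    (hc : ∀ x, Real.exp ((β - 1) * c) ≤ renyiSum β (W x) Q) (hd : c - renyiInfo β P W ≤ d) :
    Real.exp ((β - 1) * d) ≤ renyiSum β (renyiMean β P W) Q :=
  (Real.exp_le_exp.2 (mul_le_mul_of_nonpos_left hd (by linarith))).trans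
    (exp_le_renyiSum_renyiMean hβ0 hβ1.ne hP hW hc)

theorem renyiInfo_le_of_exp_le_renyiSum (hβ0 : 0 < β) (hβ1 : β < 1) (hP : IsPMF P)
    (hW : ∀ x, IsPMF (W x)) {Q : Y → ℝ} (hQ : IsPMF Q)
    (hc : ∀ x, Real.exp ((β - 1) * c) ≤ renyiSum β (W x) Q) : renyiInfo β P W ≤ c := by
  have h := (exp_le_renyiSum_renyiMean hβ0 hβ1.ne hP hW hc).trans
    (renyiSum_le_one hβ0.le hβ1.le (isPMF_renyiMean hP hW) hQ)
  rw [Real.exp_le_one_iff] at h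
  nlinarith

theorem continuousAt_sibsonSum {t : ℝ} (ht : 0 < t) (P : X → ℝ) (W : X → Y → ℝ) :
    ContinuousAt (fun β => sibsonSum β P W) t :=
  tendsto_finsetSum _ fun _ _ =>
    (tendsto_finsetSum _ fun _ _ => continuousAt_const.mul (continuousAt_const_rpow' ht.ne')).rpow
      (continuousAt_id.inv₀ ht.ne') (Or.inr (inv_pos.2 ht))

theorem tendsto_renyiInfo_of_ne_one {t : ℝ} (ht0 : 0 < t) (ht1 : t ≠ 1) (hP : IsPMF P)
    (hW : ∀ x, IsPMF (W x)) :
    Tendsto (fun β => renyiInfo β P W) (𝓝 t) (𝓝 (renyiInfo t P W)) := by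
  rw [renyiInfo_of_ne_one ht1]
  refine Tendsto.congr' ?_ ((continuousAt_id.div (continuousAt_id.sub continuousAt_const)
    (sub_ne_zero.2 ht1)).mul ((continuousAt_sibsonSum ht0 P W).log (sibsonSum_pos hP hW).ne'))
  filter_upwards [eventually_ne_nhds ht1] with β hβ
  rw [renyiInfo_of_ne_one hβ]
  rfl

theorem hasDerivAt_sibsonSum_one (hP : ∀ x, 0 ≤ P x) (hW : ∀ x y, 0 ≤ W x y) :
    HasDerivAt (fun β => sibsonSum β P W) (renyiInfo 1 P W) 1 := by
  have hI : ∑ y, (∑ x, P x * (W x y * Real.log (W x y)) -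
      (∑ x, P x * W x y) * Real.log (∑ x, P x * W x y)) = renyiInfo 1 P W := by
    rw [renyiInfo, if_pos rfl]
    simp only [Finset.mul_sum, Finset.sum_mul, ← Finset.sum_sub_distrib]
    conv_rhs => rw [Finset.sum_comm]
    refine Finset.sum_congr rfl fun y _ => Finset.sum_congr rfl fun x _ => ?_
    rcases (mul_nonneg (hP x) (hW x y)).eq_or_lt with h0 | h0
    · rcases mul_eq_zero.1 h0.symm with h | h <;> simp [h]
    · have hPW : 0 < ∑ x, P x * W x y := h0.trans_le
        (Finset.single_le_sum (fun x _ => mul_nonneg (hP x) (hW x y)) (Finset.mem_univ x))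
      rw [Real.log_div (pos_of_mul_pos_right h0 (hP x)).ne' hPW.ne']
      ring
  rw [← hI]
  exact HasDerivAt.fun_sum fun y _ => hasDerivAt_sum_mul_rpow_one hP hW y

theorem sibsonSum_one (hP : IsPMF P) (hW : ∀ x, IsPMF (W x)) : sibsonSum 1 P W = 1 := by
  simp only [sibsonSum, rpow_one, inv_one]
  rw [Finset.sum_comm]
  simp [← Finset.mul_sum, (hW _).2, hP.2]

theorem tendsto_renyiInfo_one (hP : IsPMF P) (hW : ∀ x, IsPMF (W x)) :
    Tendsto (fun β => renyiInfo β P W) (𝓝[≠] 1) (𝓝 (renyiInfo 1 P W)) := by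
  have h := (tendsto_nhdsWithin_of_tendsto_nhds tendsto_id).mul (tendsto_inv_sub_one_mul_log
    (hasDerivAt_sibsonSum_one hP.1 fun x y => (hW x).1 y) (sibsonSum_one hP hW))
  rw [one_mul] at h
  refine h.congr' ?_
  filter_upwards [self_mem_nhdsWithin] with β hβ
  rw [renyiInfo_of_ne_one hβ, id, div_eq_mul_inv, mul_assoc]

theorem tendsto_renyiInfo_nhdsWithin_Ioo {α : ℝ} (hα : α ∈ Set.Ioc (0 : ℝ) 1) (hP : IsPMF P)
    (hW : ∀ x, IsPMF (W x)) :
    Tendsto (fun β => renyiInfo β P W) (𝓝[Set.Ioo 0 1] α) (𝓝 (renyiInfo α P W)) := by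
  rcases hα.2.eq_or_lt with rfl | hα1
  · exact (tendsto_renyiInfo_one hP hW).mono_left (nhdsWithin_mono _ fun β hβ => hβ.2.ne)
  · exact (tendsto_renyiInfo_of_ne_one hα.1 hα1.ne hP hW).mono_left nhdsWithin_le_nhds

theorem isPMF_single [DecidableEq X] (x₀ : X) : IsPMF (Pi.single x₀ 1 : X → ℝ) :=
  ⟨fun x => by by_cases h : x = x₀ <;> simp [h], by simp⟩

theorem renyiInfo_single [DecidableEq X] (hβ : 0 < β) {x₀ : X} (hW : IsPMF (W x₀)) :
    renyiInfo β (Pi.single x₀ 1) W = 0 := by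
  rcases eq_or_ne β 1 with rfl | hβ1
  · simp only [renyiInfo, if_true, Pi.single_apply, ite_mul, one_mul, zero_mul,
      Finset.sum_ite_eq', Finset.mem_univ]
    exact Finset.sum_eq_zero fun y _ => by by_cases h : W x₀ y = 0 <;> simp [h]
  · simp [renyiInfo_of_ne_one hβ1, sibsonSum, Pi.single_apply, ← rpow_mul (hW.1 _),
      mul_inv_cancel₀ hβ.ne', hW.2]

variable [Nonempty X]

theorem zero_mem_setOf_renyiInfo (hW : ∀ x, IsPMF (W x)) (hβ : 0 < β) :
    (0 : ℝ) ∈ {c | ∃ P : X → ℝ, IsPMF P ∧ c = renyiInfo β P W} := by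
  classical
  obtain ⟨x₀⟩ := ‹Nonempty X›
  exact ⟨_, isPMF_single x₀, (renyiInfo_single hβ (hW x₀)).symm⟩

theorem renyiCap_nonneg (hW : ∀ x, IsPMF (W x)) (hβ : 0 < β) : 0 ≤ renyiCap β W := by
  by_cases hbdd : BddAbove {c | ∃ P : X → ℝ, IsPMF P ∧ c = renyiInfo β P W}
  · exact le_csSup hbdd (zero_mem_setOf_renyiInfo hW hβ)
  -- an unbounded `sSup` is the junk value `0`
  · exact (Real.sSup_of_not_bddAbove hbdd).ge

theorem exists_lt_renyiInfo (hW : ∀ x, IsPMF (W x)) (hβ : 0 < β) (hc : c < renyiCap β W) :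
    ∃ P, IsPMF P ∧ c < renyiInfo β P W := by
  obtain ⟨_, ⟨P, hP, rfl⟩, hlt⟩ :=
    exists_lt_of_lt_csSup ⟨0, zero_mem_setOf_renyiInfo hW hβ⟩ hc
  exact ⟨P, hP, hlt⟩

end channel

section center

variable {X Y : Type*} [Fintype X] [Fintype Y]

def IsRenyiCenter (α : ℝ) (W : X → Y → ℝ) (Q : Y → ℝ) : Prop :=
  IsPMF Q ∧ (⨆ x, renyiDivE α (W x) Q) = ENNReal.ofReal (renyiCap α W)

namespace IsRenyiCenter

variable {α : ℝ} {W : X → Y → ℝ} {Q : Y → ℝ}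

theorem renyiDivE_le (hQ : IsRenyiCenter α W Q) (x : X) :
    renyiDivE α (W x) Q ≤ ENNReal.ofReal (renyiCap α W) :=
  hQ.2 ▸ le_iSup (fun x => renyiDivE α (W x) Q) x

theorem renyiDivE_ne_top (hQ : IsRenyiCenter α W Q) (x : X) : renyiDivE α (W x) Q ≠ ⊤ :=
  ne_top_of_le_ne_top ENNReal.ofReal_ne_top (hQ.renyiDivE_le x)

variable [Nonempty X]

theorem renyiDiv_le (hQ : IsRenyiCenter α W Q) (hW : ∀ x, IsPMF (W x)) (hα : 0 < α) (x : X) :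
    renyiDiv α (W x) Q ≤ renyiCap α W := by
  have h := hQ.renyiDivE_le x
  rwa [renyiDivE_eq_ofReal (hQ.renyiDivE_ne_top x),
    ENNReal.ofReal_le_ofReal_iff (renyiCap_nonneg hW hα)] at h

theorem exp_le_renyiSum (hQ : IsRenyiCenter α W Q) (hW : ∀ x, IsPMF (W x)) (hα0 : 0 < α)
    (hα1 : α < 1) (x : X) :
    Real.exp ((α - 1) * renyiCap α W) ≤ renyiSum α (W x) Q :=
  (renyiDiv_le_iff hα1 ((renyiDivE_ne_top_iff hα1.ne).1 (hQ.renyiDivE_ne_top x))).1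
    (hQ.renyiDiv_le hW hα0 x)

theorem renyiInfo_le (hQ : IsRenyiCenter α W Q) (hW : ∀ x, IsPMF (W x)) (hα0 : 0 < α)
    (hα1 : α < 1) {P : X → ℝ} (hP : IsPMF P) : renyiInfo α P W ≤ renyiCap α W :=
  renyiInfo_le_of_exp_le_renyiSum hα0 hα1 hP hW hQ.1 (hQ.exp_le_renyiSum hW hα0 hα1)

theorem eventually_exp_le_renyiSum (hQ : IsRenyiCenter α W Q) (hW : ∀ x, IsPMF (W x))
    (hα : α ∈ Set.Ioc (0 : ℝ) 1) {δ : ℝ} (hδ : 0 < δ) :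
    ∀ᶠ β in 𝓝[Set.Ioo 0 1] α, ∀ x,
      Real.exp ((β - 1) * (renyiCap α W + δ)) ≤ renyiSum β (W x) Q := by
  refine eventually_all.2 fun x => ?_
  have hlim := tendsto_renyiDiv_nhdsWithin_Ioo hα (hW x) hQ.1.1 (hQ.renyiDivE_ne_top x)
  have hlt : renyiDiv α (W x) Q < renyiCap α W + δ := by linarith [hQ.renyiDiv_le hW hα.1 x]
  filter_upwards [hlim.eventually_le_const hlt, self_mem_nhdsWithin] with β hβ hβ01
  refine (renyiDiv_le_iff hβ01.2 ((renyiSum_pos_iff hβ01.1 hβ01.2 (hW x).1 hQ.1.1).2 ?_)).1 hβ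
  exact exists_pos_of_renyiDivE_ne_top hα (hW x) hQ.1.1 (hQ.renyiDivE_ne_top x)

end IsRenyiCenter

theorem eventually_lt_renyiCap [Nonempty X] {W : X → Y → ℝ} (hW : ∀ x, IsPMF (W x))
    {q : ℝ → Y → ℝ} (hq : ∀ β ∈ Set.Ioo (0 : ℝ) 1, IsRenyiCenter β W (q β)) {α c : ℝ}
    (hα : α ∈ Set.Ioc (0 : ℝ) 1) (hc : c < renyiCap α W) :
    ∀ᶠ β in 𝓝[Set.Ioo 0 1] α, c < renyiCap β W := by
  obtain ⟨P, hP, hcP⟩ := exists_lt_renyiInfo hW hα.1 hc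
  filter_upwards [(tendsto_renyiInfo_nhdsWithin_Ioo hα hP hW).eventually_const_lt hcP,
    self_mem_nhdsWithin] with β hβ hβ01
  exact hβ.trans_le ((hq β hβ01).renyiInfo_le hW hβ01.1 hβ01.2 hP)

end center

theorem tendsto_nhdsWithin_Ioc_of_Ioo {E : Type*} [TopologicalSpace E] {f : ℝ → E} {a b x : ℝ}
    {e : E} (hfx : f x = e) (h : Tendsto f (𝓝[Set.Ioo a b] x) (𝓝 e)) :
    Tendsto f (𝓝[Set.Ioc a b] x) (𝓝 e) := by
  subst hfx
  exact (continuousWithinAt_insert (y := b)).2 h |>.mono fun β hβ =>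
    hβ.2.eq_or_lt.imp id fun hlt => ⟨hβ.1, hlt⟩

/-- the Rényi center is continuous in the order on `(0,1]` with respect to
the total variation distance. -/
theorem renyiCenter_continuous {X Y : Type*} [Fintype X] [Fintype Y] [Nonempty X]
    (W : X → Y → ℝ) (hW : ∀ x, IsPMF (W x)) (q : ℝ → Y → ℝ)
    (hq : ∀ α ∈ Set.Ioc (0:ℝ) 1, IsPMF (q α) ∧
      (⨆ x, renyiDivE α (W x) (q α)) = ENNReal.ofReal (renyiCap α W)) :
    ∀ α ∈ Set.Ioc (0:ℝ) 1,
      Filter.Tendsto (fun β => ∑ y, |q β y - q α y|)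
        (nhdsWithin α (Set.Ioc 0 1)) (nhds 0) := by
  intro α hα
  have hcenter : ∀ β ∈ Set.Ioc (0 : ℝ) 1, IsRenyiCenter β W (q β) := hq
  refine tendsto_nhdsWithin_Ioc_of_Ioo (by simp) (Metric.tendsto_nhds.2 fun ε hε => ?_)
  obtain ⟨d, hd, hclose⟩ := exists_sum_abs_sub_lt_of_exp_le_renyiSum (Y := Y)
    (half_pos hα.1) (by linarith [hα.2]) (half_pos hε)
  have hδ : 0 < d / 3 := by positivity
  filter_upwards [(hcenter α hα).eventually_exp_le_renyiSum hW hα hδ,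
    eventually_lt_renyiCap hW (fun β hβ => hcenter β (Set.Ioo_subset_Ioc_self hβ)) hα
      (sub_lt_self _ hδ),
    self_mem_nhdsWithin, nhdsWithin_le_nhds (eventually_gt_nhds (half_lt_self hα.1))]
    with β hZα hCβ ⟨hβ0, hβ1⟩ hsβ
  have hcβ := hcenter β ⟨hβ0, hβ1.le⟩
  obtain ⟨P, hP, hIP⟩ := exists_lt_renyiInfo hW hβ0 (sub_lt_self _ hδ)
  have hα' := hclose β hsβ.le hβ1 _ _ (isPMF_renyiMean hP hW) (hcenter α hα).1
    (exp_le_renyiSum_renyiMean_of_sub_le hβ0 hβ1 hP hW hZα (by linarith))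
  have hβ' := hclose β hsβ.le hβ1 _ _ (isPMF_renyiMean hP hW) hcβ.1
    (exp_le_renyiSum_renyiMean_of_sub_le hβ0 hβ1 hP hW (hcβ.exp_le_renyiSum hW hβ0 hβ1)
      (by linarith))
  rw [Real.dist_eq, sub_zero, abs_of_nonneg (Finset.sum_nonneg fun _ _ => abs_nonneg _)]
  calc ∑ y, |q β y - q α y|
      ≤ ∑ y, (|renyiMean β P W y - q β y| + |renyiMean β P W y - q α y|) :=
        Finset.sum_le_sum fun y _ => by
          simpa only [Real.dist_eq] using dist_triangle_left (q β y) (q α y) (renyiMean β P W y)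
    _ < ε := by rw [Finset.sum_add_distrib]; linarith
end

section
/- Let W be a stochastic matrix from a finite set X to pmfs on a finite set Y, α ∈ (0,1), x ∈ X, and let W_α(·|x) be the order-α selftilted channel output distribution, i.e. the order-α tilting of W(·|x) with respect to the order-α Rényi center q_{α,W}. Then D_1(W_α(·|x) ‖ W(·|x)) ≤ ((1-α)/α)·(C_α(W) − D_1(W_α(·|x) ‖ q_{α,W})). -/
open Real MeasureTheory Filter

/-- bound on the KL divergence of the selftilted channel from the
original channel. -/
theorem selftilt_div_bound {X Y : Type*} [Fintype X] [Fintype Y] [Nonempty X]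
    (α : ℝ) (hα : α ∈ Set.Ioo (0:ℝ) 1) (W : X → Y → ℝ) (hW : ∀ x, IsPMF (W x))
    (q : Y → ℝ) (hq : IsPMF q)
    (hcenter : (⨆ x, renyiDivE α (W x) q) = ENNReal.ofReal (renyiCap α W)) (x : X) :
    renyiDiv 1 (tilt α (W x) q) (W x)
      ≤ ((1 - α) / α) * (renyiCap α W - renyiDiv 1 (tilt α (W x) q) q) := by
  classical
  obtain ⟨hα0, hα1⟩ := hα
  have hαne : α ≠ 1 := ne_of_lt hα1
  have hαne0 : α ≠ 0 := ne_of_gt hα0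
  have hβ : (0:ℝ) < 1 - α := by linarith
  set P : Y → ℝ := W x with hPdef
  set Z : ℝ := ∑ y, P y ^ α * q y ^ (1 - α) with hZdef
  set D : ℝ := renyiDiv α P q with hDdef
  -- bound from hcenter
  have hle : renyiDivE α P q ≤ ENNReal.ofReal (renyiCap α W) := by
    rw [← hcenter]
    exact le_iSup (fun x => renyiDivE α (W x) q) x
  rw [renyiDivE, if_neg hαne, ← hZdef] at hle
  have hZpos : 0 < Z := by
    by_contra h
    rw [if_neg h, top_le_iff] at hle
    exact ENNReal.ofReal_ne_top hle
  rw [if_pos hZpos] at hle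
  -- capacity nonneg
  have hC0 : 0 ≤ renyiCap α W := by
    apply Real.sSup_nonneg'
    refine ⟨0, ⟨fun x' => if x' = x then 1 else 0,
      ⟨fun x' => by by_cases h : x' = x <;> simp [h], by simp⟩, ?_⟩, le_rfl⟩
    simp only [renyiInfo, if_neg hαne]
    have hinner : ∀ y : Y, (∑ x', (if x' = x then (1:ℝ) else 0) * W x' y ^ α) ^ α⁻¹
        = W x y := by
      intro y
      rw [show (∑ x', (if x' = x then (1:ℝ) else 0) * W x' y ^ α) = W x y ^ α by
          simp [ite_mul],
        ← Real.rpow_mul ((hW x).1 y), mul_inv_cancel₀ hαne0, Real.rpow_one]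
    rw [Finset.sum_congr rfl (fun y _ => hinner y), (hW x).2, Real.log_one, mul_zero]
  -- D ≤ C
  have hDC : D ≤ renyiCap α W := (ENNReal.ofReal_le_ofReal_iff hC0).mp hle
  -- basic identity (1-α) D = - log Z
  have h1 : (1 - α) * D = - Real.log Z := by
    rw [hDdef, renyiDiv, if_neg hαne, ← hZdef]
    have hne : α - 1 ≠ 0 := sub_ne_zero.mpr hαne
    field_simp
    ring
  set T : Y → ℝ := tilt α P q with hTset
  have hexp : Real.exp ((1 - α) * D) = Z⁻¹ := by
    rw [h1, Real.exp_neg, Real.exp_log hZpos]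
  have hTdef : ∀ y, T y = Z⁻¹ * (P y ^ α * q y ^ (1 - α)) := by
    intro y
    rw [hTset]
    show Real.exp ((1 - α) * renyiDiv α P q) * P y ^ α * q y ^ (1 - α) = _
    rw [← hDdef, hexp]; ring
  have hTsum : ∑ y, T y = 1 := by
    rw [Finset.sum_congr rfl (fun y _ => hTdef y), ← Finset.mul_sum, ← hZdef,
      inv_mul_cancel₀ hZpos.ne']
  have hpt : ∀ y, α * (T y * Real.log (T y / P y)) + (1 - α) * (T y * Real.log (T y / q y))
      = T y * (- Real.log Z) := by
    intro y
    by_cases hT : T y = 0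
    · simp [hT]
    · have hPy : 0 < P y := by
        rcases lt_or_eq_of_le (show (0:ℝ) ≤ P y from (hW x).1 y) with h | h
        · exact h
        · exfalso; apply hT; rw [hTdef y, ← h, Real.zero_rpow hαne0]; ring
      have hqy : 0 < q y := by
        rcases lt_or_eq_of_le (hq.1 y) with h | h
        · exact h
        · exfalso; apply hT; rw [hTdef y, ← h, Real.zero_rpow hβ.ne']; ring
      rw [Real.log_div hT hPy.ne', Real.log_div hT hqy.ne']
      have hlogT : Real.log (T y)
          = -Real.log Z + α * Real.log (P y) + (1 - α) * Real.log (q y) := by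
        rw [hTdef y, Real.log_mul (inv_ne_zero hZpos.ne')
            (by positivity : P y ^ α * q y ^ (1 - α) ≠ 0),
          Real.log_mul (by positivity : P y ^ α ≠ 0) (by positivity : q y ^ (1 - α) ≠ 0),
          Real.log_inv, Real.log_rpow hPy, Real.log_rpow hqy]
        ring
      rw [hlogT]; ring
  have hsum : α * renyiDiv 1 T P + (1 - α) * renyiDiv 1 T q = - Real.log Z := by
    rw [renyiDiv, if_pos rfl, renyiDiv, if_pos rfl, Finset.mul_sum, Finset.mul_sum,
      ← Finset.sum_add_distrib, Finset.sum_congr rfl (fun y _ => hpt y),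
      ← Finset.sum_mul, hTsum, one_mul]
  have hfinal : α * renyiDiv 1 T P ≤ (1 - α) * (renyiCap α W - renyiDiv 1 T q) := by
    have h2 : (1 - α) * D ≤ (1 - α) * renyiCap α W :=
      mul_le_mul_of_nonneg_left hDC (le_of_lt hβ)
    nlinarith [hsum, h1]
  rw [div_mul_eq_mul_div, le_div_iff₀ hα0]
  nlinarith [hfinal]
end

section
/- Let W be a stochastic matrix from a finite set X to pmfs on a finite set Y, and for α ∈ (0,1) let W_α(·|x) be the order-α selftilted channel. Then for every α ∈ (0,1) and x ∈ X, D_1(W_α(·|x) ‖ q_{α,W}) ≤ D_α(W(·|x) ‖ q_{α,W}) ≤ C_α(W). -/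
open Real MeasureTheory Filter

/-!
With `S = ∑ y, W(y)^α q(y)^(1-α)` the self-tilted distribution is `t = W^α q^(1-α) / S`, so `log t`
is the affine combination `α log W + (1-α) log q - log S`. Integrating against `t` gives
`α D₁(t‖W) + (1-α) D₁(t‖q) = -log S = (1-α) D_α(W‖q)`, and Gibbs' inequality `D₁(t‖W) ≥ 0` yields
the first bound. The second holds because `D_α(W(·|x)‖q)` is one term of the supremum that equals
`C_α(W)`; finiteness of that supremum forces `S > 0`, and `C_α(W) ≥ 0` since a point-mass input
carries zero information.
-/

lemma sub_le_mul_log_div {t w : ℝ} (ht : 0 ≤ t) (hw : 0 ≤ w) (htw : t ≠ 0 → 0 < w) :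
    t - w ≤ t * log (t / w) := by
  rcases ht.eq_or_lt with rfl | ht
  · simpa using hw
  have hw := htw ht.ne'
  have := one_sub_inv_le_log_of_pos (div_pos ht hw)
  rw [inv_div] at this
  calc t - w = t * (1 - w / t) := by field_simp
    _ ≤ t * log (t / w) := mul_le_mul_of_nonneg_left this ht.le

section Divergence

variable {Y : Type*} [Fintype Y]

lemma renyiDiv_one_eq (W Q : Y → ℝ) : renyiDiv 1 W Q = ∑ y, W y * log (W y / Q y) := if_pos rfl

lemma renyiDiv_of_ne_one_s17 {α : ℝ} (hα : α ≠ 1) (W Q : Y → ℝ) :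
    renyiDiv α W Q = (α - 1)⁻¹ * log (∑ y, W y ^ α * Q y ^ (1 - α)) := if_neg hα

lemma renyiDivE_ne_top_iff_s17 {α : ℝ} (hα : α ≠ 1) (W Q : Y → ℝ) :
    renyiDivE α W Q ≠ ⊤ ↔ 0 < ∑ y, W y ^ α * Q y ^ (1 - α) := by
  rw [renyiDivE, if_neg hα]
  split_ifs with h <;> simp [h]

lemma renyiDivE_of_pos {α : ℝ} (hα : α ≠ 1) {W Q : Y → ℝ}
    (hS : 0 < ∑ y, W y ^ α * Q y ^ (1 - α)) :
    renyiDivE α W Q = ENNReal.ofReal (renyiDiv α W Q) := by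
  rw [renyiDivE, if_neg hα, if_pos hS]

lemma renyiDiv_one_nonneg {p r : Y → ℝ} (hp : IsPMF p) (hr : ∀ y, 0 ≤ r y)
    (hr1 : ∑ y, r y ≤ 1) (hpr : ∀ y, p y ≠ 0 → 0 < r y) : 0 ≤ renyiDiv 1 p r := by
  rw [renyiDiv_one_eq]
  calc (0 : ℝ) ≤ ∑ y, (p y - r y) := by rw [Finset.sum_sub_distrib, hp.2]; linarith
    _ ≤ _ := Finset.sum_le_sum fun y _ => sub_le_mul_log_div (hp.1 y) (hr y) (hpr y)

end Divergence

section Tilt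

variable {Y : Type*} [Fintype Y] {α : ℝ} {W Q : Y → ℝ}

lemma tilt_eq_div (hα : α ≠ 1) (hS : 0 < ∑ y, W y ^ α * Q y ^ (1 - α)) (y : Y) :
    tilt α W Q y = W y ^ α * Q y ^ (1 - α) / ∑ y, W y ^ α * Q y ^ (1 - α) := by
  have hα' : α - 1 ≠ 0 := sub_ne_zero.2 hα
  have : (1 - α) * renyiDiv α W Q = -log (∑ y, W y ^ α * Q y ^ (1 - α)) := by
    rw [renyiDiv_of_ne_one_s17 hα]
    field_simp
    ring
  rw [tilt, this, exp_neg, exp_log hS]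
  ring

lemma isPMF_tilt (hα : α ≠ 1) (hW : ∀ y, 0 ≤ W y) (hQ : ∀ y, 0 ≤ Q y)
    (hS : 0 < ∑ y, W y ^ α * Q y ^ (1 - α)) : IsPMF (tilt α W Q) := by
  refine ⟨fun y => ?_, ?_⟩
  · rw [tilt_eq_div hα hS]
    exact div_nonneg (mul_nonneg (rpow_nonneg (hW y) _) (rpow_nonneg (hQ y) _)) hS.le
  · simp_rw [tilt_eq_div hα hS]
    rw [← Finset.sum_div, div_self hS.ne']

lemma pos_of_tilt_ne_zero (hα0 : α ≠ 0) (hα1 : α ≠ 1) (hW : ∀ y, 0 ≤ W y) (hQ : ∀ y, 0 ≤ Q y)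
    {y : Y} (h : tilt α W Q y ≠ 0) : 0 < W y ∧ 0 < Q y := by
  refine ⟨(hW y).lt_of_ne fun hWy => h ?_, (hQ y).lt_of_ne fun hQy => h ?_⟩
  · simp [tilt, ← hWy, zero_rpow hα0]
  · simp [tilt, ← hQy, zero_rpow (sub_ne_zero.2 hα1.symm)]

lemma mul_renyiDiv_one_tilt_add (hα0 : α ≠ 0) (hα1 : α ≠ 1) (hW : ∀ y, 0 ≤ W y)
    (hQ : ∀ y, 0 ≤ Q y) (hS : 0 < ∑ y, W y ^ α * Q y ^ (1 - α)) :
    α * renyiDiv 1 (tilt α W Q) W + (1 - α) * renyiDiv 1 (tilt α W Q) Q =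
      (1 - α) * renyiDiv α W Q := by
  set S := ∑ y, W y ^ α * Q y ^ (1 - α)
  set t := tilt α W Q
  have hterm : ∀ y, α * (t y * log (t y / W y)) + (1 - α) * (t y * log (t y / Q y)) =
      -log S * t y := by
    intro y
    rcases eq_or_ne (t y) 0 with ht | ht
    · simp [ht]
    obtain ⟨hWy, hQy⟩ := pos_of_tilt_ne_zero hα0 hα1 hW hQ ht
    have hlog : log (t y) = α * log (W y) + (1 - α) * log (Q y) - log S := by
      rw [show t y = _ from tilt_eq_div hα1 hS y, log_div (by positivity) hS.ne',
        log_mul (by positivity) (by positivity), log_rpow hWy, log_rpow hQy]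
    rw [log_div ht hWy.ne', log_div ht hQy.ne', hlog]
    ring
  have hα' : α - 1 ≠ 0 := sub_ne_zero.2 hα1
  rw [renyiDiv_one_eq, renyiDiv_one_eq, renyiDiv_of_ne_one_s17 hα1, Finset.mul_sum, Finset.mul_sum,
    ← Finset.sum_add_distrib, Finset.sum_congr rfl fun y _ => hterm y, ← Finset.mul_sum,
    (isPMF_tilt hα1 hW hQ hS).2]
  field_simp
  ring

lemma renyiDiv_one_tilt_le (hα : α ∈ Set.Ioo 0 1) (hW : IsPMF W) (hQ : ∀ y, 0 ≤ Q y)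
    (hS : 0 < ∑ y, W y ^ α * Q y ^ (1 - α)) :
    renyiDiv 1 (tilt α W Q) Q ≤ renyiDiv α W Q := by
  obtain ⟨hα0, hα1⟩ := hα
  have hid := mul_renyiDiv_one_tilt_add hα0.ne' hα1.ne hW.1 hQ hS
  have hgibbs : 0 ≤ renyiDiv 1 (tilt α W Q) W :=
    renyiDiv_one_nonneg (isPMF_tilt hα1.ne hW.1 hQ hS) hW.1 hW.2.le
      fun _ h => (pos_of_tilt_ne_zero hα0.ne' hα1.ne hW.1 hQ h).1
  refine le_of_mul_le_mul_left ?_ (sub_pos.2 hα1)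
  linarith [mul_nonneg hα0.le hgibbs]

end Tilt

section Capacity

variable {X Y : Type*} [Fintype X] [Fintype Y]

lemma isPMF_pi_single [DecidableEq X] (x₀ : X) : IsPMF (Pi.single x₀ (1 : ℝ)) :=
  ⟨fun x => by rw [Pi.single_apply]; split_ifs <;> norm_num, by simp⟩

lemma renyiInfo_pi_single [DecidableEq X] (α : ℝ) {W : X → Y → ℝ} (x₀ : X) (hW : IsPMF (W x₀)) :
    renyiInfo α (Pi.single x₀ 1) W = 0 := by
  rw [renyiInfo]
  split_ifs with hα1
  · simp [Pi.single_apply]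
  rcases eq_or_ne α 0 with rfl | hα0
  · simp
  have hroot : ∀ y, (W x₀ y ^ α) ^ α⁻¹ = W x₀ y := fun y => by
    rw [← rpow_mul (hW.1 y), mul_inv_cancel₀ hα0, rpow_one]
  simp [Pi.single_apply, hroot, hW.2]

lemma renyiCap_nonneg_s17 {α : ℝ} {W : X → Y → ℝ} (x₀ : X) (hW : IsPMF (W x₀)) :
    0 ≤ renyiCap α W := by
  classical
  exact Real.sSup_nonneg' ⟨0, ⟨_, isPMF_pi_single x₀, (renyiInfo_pi_single α x₀ hW).symm⟩, le_rfl⟩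

end Capacity

theorem selftilt_div_le_cap_general {X Y : Type*} [Fintype X] [Fintype Y]
    (α : ℝ) (hα : α ∈ Set.Ioo (0:ℝ) 1) (W : X → Y → ℝ) (hW : ∀ x, IsPMF (W x))
    (q : Y → ℝ) (hq : IsPMF q)
    (hcenter : (⨆ x, renyiDivE α (W x) q) = ENNReal.ofReal (renyiCap α W)) (x : X) :
    renyiDiv 1 (tilt α (W x) q) q ≤ renyiDiv α (W x) q ∧
    renyiDiv α (W x) q ≤ renyiCap α W := by
  have hα1 : α ≠ 1 := hα.2.ne
  have hle : renyiDivE α (W x) q ≤ ENNReal.ofReal (renyiCap α W) :=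
    hcenter ▸ le_iSup (fun x => renyiDivE α (W x) q) x
  have hS := (renyiDivE_ne_top_iff_s17 hα1 _ _).1 (ne_top_of_le_ne_top ENNReal.ofReal_ne_top hle)
  rw [renyiDivE_of_pos hα1 hS, ENNReal.ofReal_le_ofReal_iff (renyiCap_nonneg_s17 x (hW x))] at hle
  exact ⟨renyiDiv_one_tilt_le hα (hW x) hq.1 hS, hle⟩

/-- `D_1(W_α(·|x)‖q_{α,W}) ≤ D_α(W(·|x)‖q_{α,W}) ≤ C_α(W)`. -/
theorem selftilt_div_le_cap {X Y : Type*} [Fintype X] [Fintype Y] [Nonempty X]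
    (α : ℝ) (hα : α ∈ Set.Ioo (0:ℝ) 1) (W : X → Y → ℝ) (hW : ∀ x, IsPMF (W x))
    (q : Y → ℝ) (hq : IsPMF q)
    (hcenter : (⨆ x, renyiDivE α (W x) q) = ENNReal.ofReal (renyiCap α W)) (x : X) :
    renyiDiv 1 (tilt α (W x) q) q ≤ renyiDiv α (W x) q ∧
    renyiDiv α (W x) q ≤ renyiCap α W :=
  selftilt_div_le_cap_general α hα W hW q hq hcenter x
end

section
/- Let q_α be a function from (0,1) to pmfs on a finite set Y that is continuous in total variation, and let W be a pmf on Y with D_α(W‖q_α) < ∞ for all α ∈ (0,1). Then the tilted pmf W^α_{q_α}(y) := e^{(1-α)D_α(W‖q_α)}·W(y)^α·q_α(y)^{1-α} is a continuous function of α from (0,1) to pmfs on Y in total variation, and the functions α ↦ D_α(W‖q_α), α ↦ D_1(W^α_{q_α}‖W), and α ↦ D_1(W^α_{q_α}‖q_α) are continuous from (0,1) to [0,∞). -/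
open Real MeasureTheory Filter

/-!
Everything reduces to coordinatewise continuity, since on a finite set convergence in total
variation is convergence of each coordinate. The normalizing sum `∑ W^α q_α^{1-α}` is
continuous and positive, so `D_α(W‖q_α)` and then each coordinate of the tilted pmf are
continuous. For the two KL divergences, write `D_1(P‖Q) = ∑ P log P - ∑ P log Q`; the only
delicate term is `q^{1-α} log q` near `q = 0`, which equals `(1-α)⁻¹ · m(q^{1-α})` for the
continuous function `m(x) = x log x`.
-/

theorem tendsto_sum_abs_sub_nhds_zero_iff {ι Y : Type*} [Fintype Y] {l : Filter ι}
    {f : ι → Y → ℝ} {g : Y → ℝ} :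
    Tendsto (fun i => ∑ y, |f i y - g y|) l (nhds 0) ↔
      ∀ y, Tendsto (fun i => f i y) l (nhds (g y)) := by
  refine ⟨fun h y => ?_, fun h => ?_⟩
  · rw [tendsto_iff_norm_sub_tendsto_zero]
    exact squeeze_zero (fun _ => norm_nonneg _)
      (fun i => Finset.single_le_sum (f := fun y => |f i y - g y|)
        (fun _ _ => abs_nonneg _) (Finset.mem_univ y)) h
  · simpa using tendsto_finsetSum Finset.univ fun y _ => ((h y).sub_const (g y)).abs

theorem Real.rpow_mul_log_eq_inv_mul_mul_log {x s : ℝ} (hx : 0 ≤ x) (hs : s ≠ 0) :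
    x ^ s * log x = s⁻¹ * (x ^ s * log (x ^ s)) := by
  rcases hx.eq_or_lt with rfl | hx
  · simp [Real.zero_rpow hs]
  · rw [Real.log_rpow hx]
    field_simp

theorem ContinuousOn.rpow_mul_log {X : Type*} [TopologicalSpace X] {f g : X → ℝ} {s : Set X}
    (hf : ContinuousOn f s) (hg : ContinuousOn g s) (hf0 : ∀ x ∈ s, 0 ≤ f x)
    (hg0 : ∀ x ∈ s, 0 < g x) : ContinuousOn (fun x => f x ^ g x * Real.log (f x)) s := by
  have hfg : ContinuousOn (fun x => f x ^ g x) s :=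
    hf.rpow hg fun x hx => Or.inr (hg0 x hx)
  refine ((hg.inv₀ fun x hx => (hg0 x hx).ne').mul
    (continuous_mul_log.comp_continuousOn hfg)).congr fun x hx => ?_
  exact Real.rpow_mul_log_eq_inv_mul_mul_log (hf0 x hx) (hg0 x hx).ne'

theorem continuousOn_rpow_mul_rpow {Y : Type*} {W : Y → ℝ} {q : ℝ → Y → ℝ}
    (hq : ∀ y, ContinuousOn (fun α => q α y) (Set.Ioo 0 1)) (y : Y) :
    ContinuousOn (fun α => W y ^ α * q α y ^ (1 - α)) (Set.Ioo 0 1) :=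
  (continuousOn_const.rpow continuousOn_id fun _ hα => Or.inr hα.1).mul
    ((hq y).rpow (continuousOn_const.sub continuousOn_id) fun _ hα => Or.inr (sub_pos.2 hα.2))

section KL

variable {Y : Type*} [Fintype Y]

theorem renyiDiv_one_eq_sum_mul_log_sub {P Q : Y → ℝ} (hPQ : ∀ y, Q y = 0 → P y = 0) :
    renyiDiv 1 P Q = ∑ y, (P y * log (P y) - P y * log (Q y)) := by
  rw [renyiDiv, if_pos rfl]
  refine Finset.sum_congr rfl fun y _ => ?_
  rcases eq_or_ne (P y) 0 with hP | hP
  · simp [hP]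
  · rw [Real.log_div hP fun hQ => hP (hPQ y hQ), mul_sub]

theorem continuousOn_renyiDiv_one {X : Type*} [TopologicalSpace X] {s : Set X}
    {P Q : X → Y → ℝ} (hP : ∀ y, ContinuousOn (fun x => P x y) s)
    (hPQ : ∀ y, ContinuousOn (fun x => P x y * log (Q x y)) s)
    (hac : ∀ x ∈ s, ∀ y, Q x y = 0 → P x y = 0) :
    ContinuousOn (fun x => renyiDiv 1 (P x) (Q x)) s := by
  refine (continuousOn_finsetSum Finset.univ fun y _ =>
    (continuous_mul_log.comp_continuousOn (hP y)).sub (hPQ y)).congr fun x hx => ?_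
  exact renyiDiv_one_eq_sum_mul_log_sub (hac x hx)

end KL

section Tilt

variable {Y : Type*} [Fintype Y] {W : Y → ℝ}

theorem sum_rpow_mul_rpow_pos_of_renyiDivE_ne_top {α : ℝ} {Q : Y → ℝ} (hα : α ≠ 1)
    (h : renyiDivE α W Q ≠ ⊤) : 0 < ∑ y, W y ^ α * Q y ^ (1 - α) := by
  by_contra hpos
  simp [renyiDivE, hα, hpos] at h

theorem tilt_eq_zero_of_left {α : ℝ} {Q : Y → ℝ} {y : Y} (hα : 0 < α) (hW : W y = 0) :
    tilt α W Q y = 0 := by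
  simp [tilt, hW, Real.zero_rpow hα.ne']

theorem tilt_eq_zero_of_right {α : ℝ} {Q : Y → ℝ} {y : Y} (hα : α < 1) (hQ : Q y = 0) :
    tilt α W Q y = 0 := by
  simp [tilt, hQ, Real.zero_rpow (sub_pos.2 hα).ne']

variable {q : ℝ → Y → ℝ}

theorem continuousOn_renyiDiv (hq : ∀ y, ContinuousOn (fun α => q α y) (Set.Ioo 0 1))
    (hpos : ∀ α ∈ Set.Ioo (0:ℝ) 1, 0 < ∑ y, W y ^ α * q α y ^ (1 - α)) :
    ContinuousOn (fun α => renyiDiv α W (q α)) (Set.Ioo 0 1) := by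
  have hsum := continuousOn_finsetSum Finset.univ fun y _ =>
    continuousOn_rpow_mul_rpow (W := W) hq y
  refine (((continuousOn_id.sub continuousOn_const).inv₀ fun α hα => sub_ne_zero.2 hα.2.ne).mul
    (hsum.log fun α hα => by simpa using (hpos α hα).ne')).congr fun α hα => ?_
  simp [renyiDiv, hα.2.ne]

theorem continuousOn_exp_mul_renyiDiv (hq : ∀ y, ContinuousOn (fun α => q α y) (Set.Ioo 0 1))
    (hpos : ∀ α ∈ Set.Ioo (0:ℝ) 1, 0 < ∑ y, W y ^ α * q α y ^ (1 - α)) :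
    ContinuousOn (fun α => exp ((1 - α) * renyiDiv α W (q α))) (Set.Ioo 0 1) :=
  continuous_exp.comp_continuousOn
    ((continuousOn_const.sub continuousOn_id).mul (continuousOn_renyiDiv hq hpos))

theorem continuousOn_tilt_apply (hq : ∀ y, ContinuousOn (fun α => q α y) (Set.Ioo 0 1))
    (hpos : ∀ α ∈ Set.Ioo (0:ℝ) 1, 0 < ∑ y, W y ^ α * q α y ^ (1 - α)) (y : Y) :
    ContinuousOn (fun α => tilt α W (q α) y) (Set.Ioo 0 1) := by
  simp only [tilt, mul_assoc]
  exact (continuousOn_exp_mul_renyiDiv hq hpos).mul (continuousOn_rpow_mul_rpow (W := W) hq y)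

theorem continuousOn_tilt_mul_log_right (hq : ∀ y, ContinuousOn (fun α => q α y) (Set.Ioo 0 1))
    (hpos : ∀ α ∈ Set.Ioo (0:ℝ) 1, 0 < ∑ y, W y ^ α * q α y ^ (1 - α))
    (y : Y) (hq0 : ∀ α ∈ Set.Ioo (0:ℝ) 1, 0 ≤ q α y) :
    ContinuousOn (fun α => tilt α W (q α) y * log (q α y)) (Set.Ioo 0 1) := by
  have hpow : ContinuousOn (fun α : ℝ => W y ^ α) (Set.Ioo 0 1) :=
    continuousOn_const.rpow continuousOn_id fun _ hα => Or.inr hα.1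
  have hlog : ContinuousOn (fun α => q α y ^ (1 - α) * log (q α y)) (Set.Ioo 0 1) :=
    (hq y).rpow_mul_log (continuousOn_const.sub continuousOn_id) hq0 fun _ hα => sub_pos.2 hα.2
  simp only [tilt, mul_assoc]
  exact (continuousOn_exp_mul_renyiDiv hq hpos).mul (hpow.mul hlog)

end Tilt

theorem tilt_continuous_in_order_general {Y : Type*} [Fintype Y] (q : ℝ → Y → ℝ)
    (hq : ∀ α ∈ Set.Ioo (0:ℝ) 1, IsPMF (q α))
    (hqcont : ∀ α ∈ Set.Ioo (0:ℝ) 1,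
      Filter.Tendsto (fun β => ∑ y, |q β y - q α y|) (nhdsWithin α (Set.Ioo 0 1)) (nhds 0))
    (W : Y → ℝ)
    (hfin : ∀ α ∈ Set.Ioo (0:ℝ) 1, renyiDivE α W (q α) ≠ ⊤) :
    (∀ α ∈ Set.Ioo (0:ℝ) 1,
      Filter.Tendsto (fun β => ∑ y, |tilt β W (q β) y - tilt α W (q α) y|)
        (nhdsWithin α (Set.Ioo 0 1)) (nhds 0)) ∧
    ContinuousOn (fun α => renyiDiv α W (q α)) (Set.Ioo 0 1) ∧
    ContinuousOn (fun α => renyiDiv 1 (tilt α W (q α)) W) (Set.Ioo 0 1) ∧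
    ContinuousOn (fun α => renyiDiv 1 (tilt α W (q α)) (q α)) (Set.Ioo 0 1) := by
  have hqy : ∀ y, ContinuousOn (fun α => q α y) (Set.Ioo 0 1) := fun y α hα =>
    tendsto_sum_abs_sub_nhds_zero_iff.1 (hqcont α hα) y
  have hpos : ∀ α ∈ Set.Ioo (0:ℝ) 1, 0 < ∑ y, W y ^ α * q α y ^ (1 - α) := fun α hα =>
    sum_rpow_mul_rpow_pos_of_renyiDivE_ne_top hα.2.ne (hfin α hα)
  have hT := continuousOn_tilt_apply hqy hpos
  refine ⟨fun α hα => tendsto_sum_abs_sub_nhds_zero_iff.2 fun y => hT y α hα,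
    continuousOn_renyiDiv hqy hpos, ?_, ?_⟩
  · exact continuousOn_renyiDiv_one hT (fun y => (hT y).mul continuousOn_const)
      fun α hα _ => tilt_eq_zero_of_left hα.1
  · exact continuousOn_renyiDiv_one hT
      (fun y => continuousOn_tilt_mul_log_right hqy hpos y fun α hα => (hq α hα).1 y)
      fun α hα _ => tilt_eq_zero_of_right hα.2

/-- continuity in the order of the tilted pmf and of the associated
divergences, for a continuously varying reference family `q_α`. -/
theorem tilt_continuous_in_order {Y : Type*} [Fintype Y] (q : ℝ → Y → ℝ)
    (hq : ∀ α ∈ Set.Ioo (0:ℝ) 1, IsPMF (q α))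
    (hqcont : ∀ α ∈ Set.Ioo (0:ℝ) 1,
      Filter.Tendsto (fun β => ∑ y, |q β y - q α y|) (nhdsWithin α (Set.Ioo 0 1)) (nhds 0))
    (W : Y → ℝ) (hW : IsPMF W)
    (hfin : ∀ α ∈ Set.Ioo (0:ℝ) 1, renyiDivE α W (q α) ≠ ⊤) :
    (∀ α ∈ Set.Ioo (0:ℝ) 1,
      Filter.Tendsto (fun β => ∑ y, |tilt β W (q β) y - tilt α W (q α) y|)
        (nhdsWithin α (Set.Ioo 0 1)) (nhds 0)) ∧
    ContinuousOn (fun α => renyiDiv α W (q α)) (Set.Ioo 0 1) ∧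
    ContinuousOn (fun α => renyiDiv 1 (tilt α W (q α)) W) (Set.Ioo 0 1) ∧
    ContinuousOn (fun α => renyiDiv 1 (tilt α W (q α)) (q α)) (Set.Ioo 0 1) :=
  tilt_continuous_in_order_general q hq hqcont W hfin
end
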